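/- Let N ≥ 4 be an integer, α ∈ (0,1), and suppose the real sequences x_0,…,x_{N−3} and y_0,…,y_{N−2} solve the absorption system. Define T̄ = 2·[ Σ_{i=0}^{N−3} x_i + Σ_{j=0}^{N−2} y_j + Σ_{k=0}^{N−4} Σ_{ℓ=1}^{N−3−k} (ℓ + x_k) ] / (N(N−1)). Then T̄ = [ N⁴(α+1)² + N³(α+1)² + 12N²(α−1)² − 24N(α−1)(2α−1) + 24(α−1)² ] / ( 24N(1−α)(1+α) ). -/

import Mathlib

/-!
Multiply equation (ii)ₖ by `aₖ`, equation (iii)ₖ₊₁ by `bₖ₊₁` and equation (i) by `b₀`, where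
`(a, b)` solves the transposed system with right-hand side `(1 - α²)·(N - 2 - k)` on the
`x`-side and `1 - α²` on the `y`-side. After reflecting and shifting indices the left-hand sides
add up to `(1 - α²)·(∑ₖ (N - 2 - k) xₖ + ∑ⱼ yⱼ)`, which is `(1 - α²)` times the bracket of `T̄`
up to a tetrahedral number. The transposed system has a solution quadratic in `k`, so the
right-hand sides add up to a sum of cubics in `k`, which is an explicit polynomial in `N` and `α`.
-/

/-- The sequences `x_0,…,x_{N−3}` and `y_0,…,y_{N−2}` solve the absorption
(expected-hitting-time) system with `ρ = (1−α)/2`: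
(i) `y_0 − α·y_{N−2} = 1`;
(ii) `x_k − (1−ρ)·y_k − ρ·x_{N−k−3} = 1 + kρ` for `0 ≤ k ≤ N−3`;
(iii) `y_k − ρ·y_{k−1} − (1−ρ)·x_{N−k−2} = k − (k−1)ρ` for `1 ≤ k ≤ N−2`. -/
def solvesAbsorption (N : ℕ) (α : ℝ) (x y : ℕ → ℝ) : Prop :=
  y 0 - α * y (N - 2) = 1 ∧
  (∀ k : ℕ, k ≤ N - 3 →
    x k - (1 - (1 - α) / 2) * y k - (1 - α) / 2 * x (N - k - 3) =
      1 + (k : ℝ) * ((1 - α) / 2)) ∧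
  (∀ k : ℕ, 1 ≤ k → k ≤ N - 2 →
    y k - (1 - α) / 2 * y (k - 1) - (1 - (1 - α) / 2) * x (N - k - 2) =
      (k : ℝ) - ((k : ℝ) - 1) * ((1 - α) / 2))

open Finset

theorem sum_Icc_one_natCast_add (j : ℕ) (c : ℝ) :
    ∑ l ∈ Icc 1 j, ((l : ℝ) + c) = j * (j + 1) / 2 + j * c := by
  induction j with
  | zero => simp
  | succ j ih =>
    rw [sum_Icc_succ_top (by omega), ih]
    push_cast
    ring

theorem sum_range_cubic (n : ℕ) (c₀ c₁ c₂ c₃ : ℝ) :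
    ∑ k ∈ range n, (c₀ + c₁ * k + c₂ * k ^ 2 + c₃ * k ^ 3) =
      c₀ * n + c₁ * (n * (n - 1) / 2) + c₂ * (n * (n - 1) * (2 * n - 1) / 6) +
        c₃ * (n * (n - 1) / 2) ^ 2 := by
  induction n with
  | zero => simp
  | succ n ih =>
    rw [sum_range_succ, ih]
    push_cast
    ring

theorem absorption_weighted_sum_eq_transpose (n : ℕ) (p q α : ℝ) (a b x y : ℕ → ℝ) :
    ∑ k ∈ range n, a k * (x k - p * y k - q * x (n - 1 - k)) +
        ∑ k ∈ range n, b (k + 1) * (y (k + 1) - q * y k - p * x (n - 1 - k)) +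
        b 0 * (y 0 - α * y n) =
      ∑ k ∈ range n, (a k - q * a (n - 1 - k) - p * b (n - k)) * x k +
        ∑ k ∈ range n, (b k - p * a k - q * b (k + 1)) * y k + (b n - α * b 0) * y n := by
  have reflect_a : ∑ k ∈ range n, a k * x (n - 1 - k) = ∑ k ∈ range n, a (n - 1 - k) * x k := by
    rw [← sum_range_reflect]
    refine sum_congr rfl fun k hk => ?_
    rw [Nat.sub_sub_self (by simp only [mem_range] at hk; omega)]
  have reflect_b : ∑ k ∈ range n, b (k + 1) * x (n - 1 - k) = ∑ k ∈ range n, b (n - k) * x k := by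
    rw [← sum_range_reflect]
    refine sum_congr rfl fun k hk => ?_
    simp only [mem_range] at hk
    rw [Nat.sub_sub_self (by omega), show n - 1 - k + 1 = n - k by omega]
  have shift_b : ∑ k ∈ range n, b (k + 1) * y (k + 1) =
      ∑ k ∈ range n, b k * y k + b n * y n - b 0 * y 0 := by
    rw [← sum_range_succ, sum_range_succ']
    ring
  simp only [mul_sub, sub_mul, sum_sub_distrib, mul_assoc, mul_left_comm _ p, mul_left_comm _ q,
    ← mul_sum, reflect_a, reflect_b, shift_b]
  ring

-- `(xWeight, yWeight)` is the quadratic solution of the transposed system; `n = N - 2`.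
noncomputable def adjointWeight (n α k : ℝ) : ℝ :=
  (n + 1) * (n + 2) / 2 - (1 - α) * (n + 3) * k / 2 + (1 + α) * (n + 2) * k * (n - k) / 4

noncomputable def xWeight (n α k : ℝ) : ℝ :=
  2 * adjointWeight n α k - (1 - α) * adjointWeight n α (k + 1) - 2 * (1 - α)

noncomputable def yWeight (n α k : ℝ) : ℝ :=
  (1 + α) * adjointWeight n α k

theorem xWeight_transpose (n α k : ℝ) :
    xWeight n α k - (1 - α) / 2 * xWeight n α (n - 1 - k) -
        (1 - (1 - α) / 2) * yWeight n α (n - k) = (1 - α) * (1 + α) * (n - k) := by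
  unfold xWeight yWeight adjointWeight
  ring

theorem yWeight_transpose (n α k : ℝ) :
    yWeight n α k - (1 - (1 - α) / 2) * xWeight n α k - (1 - α) / 2 * yWeight n α (k + 1) =
      (1 - α) * (1 + α) := by
  unfold xWeight yWeight
  ring

theorem yWeight_boundary (n α : ℝ) :
    yWeight n α n - α * yWeight n α 0 = (1 - α) * (1 + α) := by
  unfold yWeight adjointWeight
  ring

theorem solvesAbsorption.weighted_sum_eq {n : ℕ} {α : ℝ} {x y : ℕ → ℝ}
    (h : solvesAbsorption (n + 2) α x y) :
    (1 - α) * (1 + α) * (∑ k ∈ range n, ((n : ℝ) - k) * x k + ∑ k ∈ range (n + 1), y k) =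
      ((n : ℝ) + 1) * (((n : ℝ) + 2) ^ 4 * (α + 1) ^ 2 + ((n : ℝ) + 2) ^ 3 * (α + 1) ^ 2 +
          12 * ((n : ℝ) + 2) ^ 2 * (α - 1) ^ 2 - 24 * ((n : ℝ) + 2) * (α - 1) * (2 * α - 1) +
          24 * (α - 1) ^ 2) / 48 -
        (1 - α) * (1 + α) * ((n : ℝ) + 1) * n * (n - 1) / 6 := by
  obtain ⟨h_init, h_x, h_y⟩ := h
  set p : ℝ := 1 - (1 - α) / 2
  set q : ℝ := (1 - α) / 2
  set a : ℕ → ℝ := fun k => xWeight n α k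
  set b : ℕ → ℝ := fun k => yWeight n α k
  rw [Nat.add_sub_cancel] at h_init
  have eq_x : ∀ k ∈ range n, x k - p * y k - q * x (n - 1 - k) = 1 + k * q := by
    intro k hk
    simp only [mem_range] at hk
    simpa [show n + 2 - k - 3 = n - 1 - k by omega] using h_x k (by omega)
  have eq_y : ∀ k ∈ range n, y (k + 1) - q * y k - p * x (n - 1 - k) = (k + 1) - k * q := by
    intro k hk
    simp only [mem_range] at hk
    have := h_y (k + 1) (by omega) (by omega)
    rw [show n + 2 - (k + 1) - 2 = n - 1 - k by omega, Nat.add_sub_cancel] at this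
    push_cast at this
    linear_combination this
  have coeff_x : ∀ k ∈ range n,
      a k - q * a (n - 1 - k) - p * b (n - k) = (1 - α) * (1 + α) * (n - k) := by
    intro k hk
    simp only [mem_range] at hk
    have cast_reflect : ((n - 1 - k : ℕ) : ℝ) = n - 1 - k := by
      rw [Nat.sub_sub, Nat.cast_sub (by omega)]
      push_cast
      ring
    simp only [a, b, cast_reflect, Nat.cast_sub hk.le]
    exact xWeight_transpose n α k
  have coeff_y : ∀ k : ℕ, b k - p * a k - q * b (k + 1) = (1 - α) * (1 + α) := by
    intro k
    simpa [a, b] using yWeight_transpose n α k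
  have boundary : b n - α * b 0 = (1 - α) * (1 + α) := by
    simpa [b] using yWeight_boundary n α
  have summand_cubic : ∀ k : ℕ, a k * (1 + k * q) + b (k + 1) * ((k + 1) - k * q) =
      ((1 + α) * (2 + α) * n ^ 2 / 2 + n * (6 + 5 * α + 3 * α ^ 2) / 2 + 2 * α ^ 2) +
        ((1 + α) ^ 2 * n ^ 2 + n * (3 + 4 * α + 5 * α ^ 2) / 2 - 3 - 3 * α + 2 * α ^ 2) * k +
        ((1 + α) ^ 2 * n * (n - 2) / 4 - (1 + α) * (5 + 3 * α) / 2) * k ^ 2 +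
        (-(1 + α) ^ 2 * (n + 2) / 4) * k ^ 3 := by
    intro k
    simp only [a, b, q, xWeight, yWeight, adjointWeight]
    push_cast
    ring
  have combination := absorption_weighted_sum_eq_transpose n p q α a b x y
  rw [sum_congr rfl fun k hk => congrArg (a k * ·) (eq_x k hk),
    sum_congr rfl fun k hk => congrArg (b (k + 1) * ·) (eq_y k hk), h_init, ← sum_add_distrib,
    sum_congr rfl fun k _ => summand_cubic k, sum_range_cubic,
    sum_congr rfl fun k hk => congrArg (· * x k) (coeff_x k hk),
    sum_congr rfl fun k _ => congrArg (· * y k) (coeff_y k), boundary] at combination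
  simp only [mul_assoc, ← mul_sum] at combination
  simp only [b, yWeight, adjointWeight, Nat.cast_zero] at combination
  rw [sum_range_succ]
  linear_combination -combination

theorem sum_add_sum_sum_Icc (m : ℕ) (x : ℕ → ℝ) :
    ∑ k ∈ range (m + 1), x k + ∑ k ∈ range m, ∑ l ∈ Icc 1 (m - k), ((l : ℝ) + x k) =
      ∑ k ∈ range (m + 1), ((m : ℝ) + 1 - k) * x k + m * (m + 1) * (m + 2) / 6 := by
  have extend : ∑ k ∈ range m, ∑ l ∈ Icc 1 (m - k), ((l : ℝ) + x k) =
      ∑ k ∈ range (m + 1), ∑ l ∈ Icc 1 (m - k), ((l : ℝ) + x k) := by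
    simp [sum_range_succ]
  have summand : ∀ k ∈ range (m + 1), x k + ∑ l ∈ Icc 1 (m - k), ((l : ℝ) + x k) =
      ((m : ℝ) + 1 - k) * x k +
        (m * (m + 1) / 2 + (-(2 * m + 1) / 2) * k + (1 / 2) * k ^ 2 + 0 * k ^ 3) := by
    intro k hk
    rw [sum_Icc_one_natCast_add, Nat.cast_sub (Nat.lt_succ_iff.mp (mem_range.mp hk))]
    ring
  rw [extend, ← sum_add_distrib, sum_congr rfl summand, sum_add_distrib, sum_range_cubic]
  push_cast
  ring

/-- Closed form of the worst-case expected number of interactions until a compression,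
`T̄ = 2·[Σ x_i + Σ y_j + Σ_k Σ_ℓ (ℓ + x_k)] / (N(N−1))`. -/
theorem stmt2 (N : ℕ) (hN : 4 ≤ N) (α : ℝ) (hα : α ∈ Set.Ioo (0 : ℝ) 1)
    (x y : ℕ → ℝ) (h : solvesAbsorption N α x y) :
    2 * (∑ i ∈ Finset.range (N - 2), x i + ∑ j ∈ Finset.range (N - 1), y j +
          ∑ k ∈ Finset.range (N - 3), ∑ l ∈ Finset.Icc 1 (N - 3 - k), ((l : ℝ) + x k)) /
        ((N : ℝ) * ((N : ℝ) - 1)) =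
      ((N : ℝ) ^ 4 * (α + 1) ^ 2 + (N : ℝ) ^ 3 * (α + 1) ^ 2 +
          12 * (N : ℝ) ^ 2 * (α - 1) ^ 2 - 24 * (N : ℝ) * (α - 1) * (2 * α - 1) +
          24 * (α - 1) ^ 2) /
        (24 * (N : ℝ) * (1 - α) * (1 + α)) := by
  obtain ⟨m, rfl⟩ : ∃ m, N = m + 3 := ⟨N - 3, by omega⟩
  have key := solvesAbsorption.weighted_sum_eq (n := m + 1) h
  rw [show m + 3 - 2 = m + 1 by omega, show m + 3 - 1 = m + 1 + 1 by omega, Nat.add_sub_cancel,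
    add_right_comm, sum_add_sum_sum_Icc]
  push_cast at key ⊢
  obtain ⟨hα₀, hα₁⟩ := hα
  have hN₀ : (0 : ℝ) < (m + 3) * (m + 3 - 1) := by nlinarith [m.cast_nonneg (α := ℝ)]
  have hden : (0 : ℝ) < 24 * (m + 3) * (1 - α) * (1 + α) := by
    have : (0 : ℝ) < 1 - α := sub_pos.2 hα₁
    positivity
  rw [div_eq_div_iff hN₀.ne' hden.ne']
  linear_combination 48 * ((m : ℝ) + 3) * key
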